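/- Let A be the 2×2 coloring matrix with rows (1,1) and (0,1). For n ≥ 2, the number of A-colored plane trees on n vertices equals C_{n-1} + D_n, where C_{n-1} counts plane trees on n vertices and D_n is the number of nonempty antichains over all plane trees with n vertices. -/

import Mathlib

inductive CTree (α : Type) : Type
  | node : α → List (CTree α) → CTree α

namespace CTree

def color {α : Type} : CTree α → α
  | node c _ => c

def children {α : Type} : CTree α → List (CTree α)
  | node _ ts => ts

def size {α : Type} : CTree α → ℕ
  | node _ ts => 1 + (ts.attach.map fun t => size t.1).sum
decreasing_by
  have := List.sizeOf_lt_of_mem t.2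
  simp only [CTree.node.sizeOf_spec]
  omega

def Valid {α : Type} (A : Matrix α α ℕ) : CTree α → Prop
  | node c ts => ∀ t ∈ ts, A c t.color = 1 ∧ Valid A t

end CTree

/-- Number of `A`-colored plane trees with `n` vertices and root color `i`. -/
noncomputable def colorCount {m : ℕ} (A : Matrix (Fin m) (Fin m) ℕ) (i : Fin m) (n : ℕ) : ℕ :=
  {t : CTree (Fin m) | t.Valid A ∧ t.size = n ∧ t.color = i}.ncard

/-- Total number of `A`-colored plane trees with `n` vertices. -/
noncomputable def totalCount {α : Type} (A : Matrix α α ℕ) (n : ℕ) : ℕ :=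
  {t : CTree α | t.Valid A ∧ t.size = n}.ncard

namespace CTree

/-- `t.IsVertex p` means the list of child indices `p` addresses a vertex of `t`. -/
def IsVertex {α : Type} : CTree α → List ℕ → Prop
  | _, [] => True
  | t, i :: p => ∃ h : i < t.children.length, (t.children.get ⟨i, h⟩).IsVertex p

end CTree

/-- `D_n`: the number of pairs (plane tree on `n` vertices, nonempty antichain of its
vertices), where an antichain contains no vertex that is an ancestor (proper prefix) of
another. -/
noncomputable def antichainCount (n : ℕ) : ℕ :=
  {ts : CTree Unit × Set (List ℕ) |
    ts.1.size = n ∧ ts.2.Nonempty ∧ (∀ p ∈ ts.2, ts.1.IsVertex p) ∧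
    ∀ p ∈ ts.2, ∀ q ∈ ts.2, p ≠ q → ¬ p <+: q}.ncard

/-! In a valid coloring the vertices of color `1` (the paper's color 2) form a union of full
subtrees, so a coloring is determined by its shape and the antichain of roots of its maximal
color-`1` subtrees, and every antichain of a plane tree arises this way. Colorings on `n`
vertices therefore correspond to pairs (plane tree, possibly empty antichain). The nonempty
antichains are counted by `D_n`; the empty one gives one coloring per plane tree, and plane trees
on `n` vertices are counted by `C_{n-1}` through the rotation correspondence with binary trees. -/

namespace CTree

variable {α β γ : Type}

theorem ind {P : CTree α → Prop} (node : ∀ c ts, (∀ t ∈ ts, P t) → P (node c ts)) :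
    ∀ t, P t
  | .node c ts => node c ts fun t _ => ind node t

theorem size_node (c : α) (ts : List (CTree α)) :
    (node c ts).size = 1 + (ts.map size).sum := by
  rw [size, List.attach_map_val]

def map (f : α → β) : CTree α → CTree β
  | node c ts => node (f c) (ts.map (map f))

theorem map_node (f : α → β) (c : α) (ts : List (CTree α)) :
    (node c ts).map f = node (f c) (ts.map (map f)) := by
  rw [map]

theorem map_map (f : α → β) (g : β → γ) (t : CTree α) :
    (t.map f).map g = t.map (g ∘ f) := by
  induction t using ind with
  | node c ts ih =>
    simp only [map_node, List.map_map, Function.comp_apply]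
    exact congrArg _ (List.map_congr_left ih)

theorem map_id (t : CTree α) : t.map id = t := by
  induction t using ind with
  | node c ts ih =>
    rw [map_node]
    exact congrArg _ ((List.map_congr_left ih).trans (List.map_id ts))

@[simp]
theorem color_map (f : α → β) (t : CTree α) : (t.map f).color = f t.color := by
  obtain ⟨c, ts⟩ := t
  rw [map_node]
  rfl

@[simp]
theorem size_map (f : α → β) (t : CTree α) : (t.map f).size = t.size := by
  induction t using ind with
  | node c ts ih =>
    rw [map_node, size_node, size_node, List.map_map]
    exact congrArg _ (congrArg _ (List.map_congr_left ih))

theorem isVertex_map (f : α → β) :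
    ∀ (t : CTree α) (p : List ℕ), (t.map f).IsVertex p ↔ t.IsVertex p
  | _, [] => Iff.rfl
  | node c ts, i :: p => by
    simp only [IsVertex, map_node, children, List.length_map, List.get_eq_getElem,
      List.getElem_map, isVertex_map f _ p]

def shape (t : CTree α) : CTree Unit := t.map fun _ => ()

@[simp]
theorem size_shape (t : CTree α) : t.shape.size = t.size := size_map ..

theorem shape_node (c : α) (ts : List (CTree α)) :
    (node c ts).shape = node () (ts.map shape) :=
  map_node ..

theorem shape_map (f : Unit → α) (u : CTree Unit) : (u.map f).shape = u := by
  rw [shape, map_map]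
  exact map_id u

theorem finite_setOf_isVertex (t : CTree α) : {p | t.IsVertex p}.Finite := by
  induction t using ind with
  | node c ts ih =>
    refine ((Set.finite_iUnion fun i : Fin ts.length =>
      (ih _ (List.get_mem ts i)).image (List.cons i.1)).insert []).subset ?_
    rintro (_ | ⟨i, q⟩) hp
    · exact Set.mem_insert _ _
    · obtain ⟨h, hq⟩ := hp
      exact Set.mem_insert_of_mem _ (Set.mem_iUnion.mpr ⟨⟨i, h⟩, q, hq, rfl⟩)

/-- The rotation correspondence: the left subtree encodes the children of the first tree, the
right subtree the remaining trees. -/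
def ofForest : List (CTree Unit) → BinaryTree Unit
  | [] => .nil
  | node _ cs :: ts => .node () (ofForest cs) (ofForest ts)

def toForest : BinaryTree Unit → List (CTree Unit)
  | .nil => []
  | .node _ l r => node () (toForest l) :: toForest r

theorem ofForest_toForest : ∀ b : BinaryTree Unit, ofForest (toForest b) = b
  | .nil => by rw [toForest, ofForest]
  | .node _ l r => by rw [toForest, ofForest, ofForest_toForest l, ofForest_toForest r]

theorem toForest_ofForest : ∀ ts : List (CTree Unit), toForest (ofForest ts) = ts
  | [] => by rw [ofForest, toForest]
  | node _ cs :: ts => by rw [ofForest, toForest, toForest_ofForest cs, toForest_ofForest ts]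

theorem numNodes_ofForest : ∀ ts : List (CTree Unit), (ofForest ts).numNodes = (ts.map size).sum
  | [] => by rw [ofForest, BinaryTree.numNodes, List.map_nil, List.sum_nil]
  | node c cs :: ts => by
    rw [ofForest, BinaryTree.numNodes, numNodes_ofForest cs, numNodes_ofForest ts, List.map_cons,
      List.sum_cons, size_node]
    omega

theorem setOf_size_eq_succ (n : ℕ) :
    {u : CTree Unit | u.size = n + 1} =
      (fun b => node () (toForest b)) '' ↑(BinaryTree.treesOfNumNodesEq n) := by
  ext ⟨_, ts⟩
  simp only [Set.mem_ofPred_eq, BinaryTree.coe_treesOfNumNodesEq, Set.mem_image, node.injEq,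
    true_and, size_node]
  constructor
  · intro h
    exact ⟨ofForest ts, by rw [numNodes_ofForest]; omega, toForest_ofForest ts⟩
  · rintro ⟨b, hb, rfl⟩
    rw [← numNodes_ofForest, ofForest_toForest, hb, add_comm]

theorem finite_setOf_size_eq_succ (n : ℕ) : {u : CTree Unit | u.size = n + 1}.Finite := by
  rw [setOf_size_eq_succ]
  exact Set.Finite.image _ (Finset.finite_toSet _)

theorem ncard_setOf_size_eq_succ (n : ℕ) :
    {u : CTree Unit | u.size = n + 1}.ncard = catalan n := by
  rw [setOf_size_eq_succ, Set.ncard_image_of_injective, Set.ncard_coe_finset,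
    BinaryTree.treesOfNumNodesEq_card_eq_catalan]
  intro a b h
  rw [← ofForest_toForest a, ← ofForest_toForest b, (node.inj h).2]

def treesWithAntichain (n : ℕ) : Set (CTree Unit × Set (List ℕ)) :=
  {x | x.1.size = n ∧ (∀ p ∈ x.2, x.1.IsVertex p) ∧ IsAntichain (· <+: ·) x.2}

theorem finite_treesWithAntichain (n : ℕ) : (treesWithAntichain (n + 1)).Finite := by
  refine ((finite_setOf_size_eq_succ n).biUnion fun u _ =>
    (finite_setOf_isVertex u).finite_subsets.image (Prod.mk u)).subset ?_
  rintro ⟨u, S⟩ ⟨hsize, hV, -⟩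
  exact Set.mem_biUnion hsize ⟨S, hV, rfl⟩

theorem ncard_treesWithAntichain (n : ℕ) :
    (treesWithAntichain (n + 1)).ncard = catalan n + antichainCount (n + 1) := by
  have hsplit : treesWithAntichain (n + 1) =
      (fun u => (u, ∅)) '' {u | u.size = n + 1} ∪
        {x | x.1.size = n + 1 ∧ x.2.Nonempty ∧ (∀ p ∈ x.2, x.1.IsVertex p) ∧
          ∀ p ∈ x.2, ∀ q ∈ x.2, p ≠ q → ¬ p <+: q} := by
    ext ⟨u, S⟩
    rcases S.eq_empty_or_nonempty with rfl | hS
    · simp [treesWithAntichain]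
    · simp [treesWithAntichain, hS, hS.ne_empty.symm, IsAntichain, Set.Pairwise]
  have hfin := finite_treesWithAntichain n
  rw [hsplit] at hfin ⊢
  rw [Set.ncard_union_eq ?_ (hfin.subset Set.subset_union_left)
    (hfin.subset Set.subset_union_right),
    Set.ncard_image_of_injective _ (Prod.mk_left_injective ∅),
    ncard_setOf_size_eq_succ]
  · rfl
  · rw [Set.disjoint_left]
    rintro _ ⟨u, -, rfl⟩ ⟨-, hne, -⟩
    exact Set.not_nonempty_empty hne

local notation "𝔸" => (!![1, 1; 0, 1] : Matrix (Fin 2) (Fin 2) ℕ)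

theorem upperMatrix_eq_one_iff : ∀ c d : Fin 2, 𝔸 c d = 1 ↔ (c = 1 → d = 1) := by
  intro c d
  fin_cases c <;> fin_cases d <;> simp

theorem valid_node_iff (c : Fin 2) (ts : List (CTree (Fin 2))) :
    Valid 𝔸 (node c ts) ↔ ∀ t ∈ ts, (c = 1 → t.color = 1) ∧ Valid 𝔸 t := by
  simp only [Valid, upperMatrix_eq_one_iff]

theorem valid_map_const_one (u : CTree α) : Valid 𝔸 (u.map fun _ => 1) := by
  induction u using ind with
  | node c ts ih =>
    simp only [map_node, valid_node_iff, List.mem_map]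
    rintro _ ⟨t, ht, rfl⟩
    exact ⟨fun _ => color_map .., ih t ht⟩

theorem map_const_one_of_valid {t : CTree (Fin 2)} (hv : Valid 𝔸 t) (hc : t.color = 1) :
    t.map (fun _ => 1) = t := by
  induction t using ind with
  | node c ts ih =>
    obtain rfl : c = 1 := hc
    rw [valid_node_iff] at hv
    rw [map_node]
    exact congrArg _ ((List.map_congr_left fun t ht =>
      ih t ht (hv t ht).2 ((hv t ht).1 rfl)).trans (List.map_id ts))

/-- `p` is the root of a maximal subtree of color `1`. -/
def IsOneRoot : CTree (Fin 2) → List ℕ → Prop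
  | t, [] => t.color = 1
  | t, i :: p => t.color = 0 ∧ ∃ h : i < t.children.length, IsOneRoot t.children[i] p

theorem IsOneRoot.isVertex : ∀ {t : CTree (Fin 2)} {p : List ℕ}, t.IsOneRoot p → t.IsVertex p
  | _, [], _ => trivial
  | _, _ :: _, ⟨_, h, hp⟩ => ⟨h, hp.isVertex⟩

theorem IsOneRoot.eq_of_prefix :
    ∀ {t : CTree (Fin 2)} {p q : List ℕ}, t.IsOneRoot p → t.IsOneRoot q → p <+: q → p = q
  | _, [], [], _, _, _ => rfl
  | _, [], _ :: _, hp, hq, _ => by simp_all [IsOneRoot]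
  | _, _ :: _, [], _, _, hpq => absurd hpq (by simp)
  | _, i :: p, j :: q, ⟨_, _, hp⟩, ⟨_, _, hq⟩, hpq => by
    obtain ⟨rfl, hpq'⟩ := List.cons_prefix_cons.mp hpq
    rw [hp.eq_of_prefix hq hpq']

theorem isAntichain_isOneRoot (t : CTree (Fin 2)) :
    IsAntichain (· <+: ·) {p | t.IsOneRoot p} :=
  fun _ hp _ hq hne hpq => hne (IsOneRoot.eq_of_prefix hp hq hpq)

theorem isOneRoot_map_const_one_iff (u : CTree α) (p : List ℕ) :
    (u.map fun _ => 1).IsOneRoot p ↔ p = [] := by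
  cases p <;> simp [IsOneRoot]

open Classical in
/-- Inverse to `t ↦ (t.shape, {p | t.IsOneRoot p})`: colors `1` the subtrees rooted in `S`. -/
noncomputable def paint : CTree Unit → Set (List ℕ) → CTree (Fin 2)
  | u@(node _ ts), S => if [] ∈ S then u.map fun _ => 1 else
      node 0 (List.ofFn fun i : Fin ts.length => paint ts[i] (List.cons i.1 ⁻¹' S))
decreasing_by
  have := List.sizeOf_lt_of_mem (List.getElem_mem (l := ts) i.2)
  simp only [node.sizeOf_spec, Fin.getElem_fin] at *
  omega

theorem paint_of_mem {u : CTree Unit} {S : Set (List ℕ)} (h : [] ∈ S) :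
    paint u S = u.map fun _ => 1 := by
  obtain ⟨c, ts⟩ := u
  rw [paint, if_pos h]

theorem paint_node_of_not_mem (c : Unit) (ts : List (CTree Unit)) {S : Set (List ℕ)}
    (h : [] ∉ S) :
    paint (node c ts) S =
      node 0 (List.ofFn fun i : Fin ts.length => paint ts[i] (List.cons i.1 ⁻¹' S)) := by
  rw [paint, if_neg h]

theorem shape_paint (u : CTree Unit) (S : Set (List ℕ)) : (paint u S).shape = u := by
  induction u using ind generalizing S with
  | node c ts ih =>
    by_cases h : [] ∈ S
    · rw [paint_of_mem h, shape_map]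
    · rw [paint_node_of_not_mem c ts h, shape_node]
      congr 1
      refine List.ext_getElem (by simp) fun i _ hi => ?_
      simp only [List.getElem_map, List.getElem_ofFn]
      exact ih _ (List.getElem_mem hi) _

theorem valid_paint (u : CTree Unit) (S : Set (List ℕ)) : Valid 𝔸 (paint u S) := by
  induction u using ind generalizing S with
  | node c ts ih =>
    by_cases h : [] ∈ S
    · rw [paint_of_mem h]
      exact valid_map_const_one _
    · rw [paint_node_of_not_mem c ts h, valid_node_iff]
      simp only [List.mem_ofFn, forall_exists_index]
      rintro _ i rfl
      exact ⟨fun h01 => absurd h01 (by decide), ih _ (List.getElem_mem i.2) _⟩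

theorem isOneRoot_paint_iff : ∀ {u : CTree Unit} {S : Set (List ℕ)} {p : List ℕ},
    (∀ q ∈ S, u.IsVertex q) → IsAntichain (· <+: ·) S →
      ((paint u S).IsOneRoot p ↔ p ∈ S)
  | node c ts, S, p, hV, hS => by
    by_cases h : [] ∈ S
    · rw [paint_of_mem h, isOneRoot_map_const_one_iff]
      refine ⟨by rintro rfl; exact h, fun hp => ?_⟩
      by_contra hne
      exact hS h hp (Ne.symm hne) List.nil_prefix
    rw [paint_node_of_not_mem c ts h]
    match p with
    | [] => simp [IsOneRoot, color, h]
    | i :: q =>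
      simp only [IsOneRoot, color, children, List.length_ofFn, List.getElem_ofFn, true_and]
      have hVi : ∀ r ∈ List.cons i ⁻¹' S, ∃ hi : i < ts.length, ts[i].IsVertex r :=
        fun r hr => hV _ hr
      have hSi : IsAntichain (· <+: ·) (List.cons i ⁻¹' S) :=
        hS.preimage List.cons_injective fun _ _ h => List.cons_prefix_cons.mpr ⟨rfl, h⟩
      constructor
      · rintro ⟨hi, hq⟩
        exact (isOneRoot_paint_iff (fun r hr => (hVi r hr).2) hSi).1 hq
      · intro hq
        obtain ⟨hi, -⟩ := hVi q hq
        exact ⟨hi, (isOneRoot_paint_iff (fun r hr => (hVi r hr).2) hSi).2 hq⟩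

theorem paint_shape_setOf_isOneRoot {t : CTree (Fin 2)} (hv : Valid 𝔸 t) :
    paint t.shape {p | t.IsOneRoot p} = t := by
  induction t using ind with
  | node c ts ih =>
    obtain rfl | rfl : c = 0 ∨ c = 1 := by omega
    · rw [shape_node, paint_node_of_not_mem _ _ (by simp [IsOneRoot, color])]
      rw [valid_node_iff] at hv
      congr 1
      refine List.ext_getElem (by simp) fun i _ hi => ?_
      simp only [List.getElem_ofFn, Fin.getElem_fin, List.getElem_map]
      have hroots :
          List.cons i ⁻¹' {p | (node 0 ts).IsOneRoot p} = {p | ts[i].IsOneRoot p} := by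
        ext p
        simp [IsOneRoot, color, children, hi]
      rw [hroots]
      exact ih _ (List.getElem_mem _) (hv _ (List.getElem_mem _)).2
    · rw [paint_of_mem (by simp [IsOneRoot, color]), shape, map_map]
      exact map_const_one_of_valid hv rfl

theorem image_shape_isOneRoot (n : ℕ) :
    (fun t => (t.shape, {p | t.IsOneRoot p})) '' {t | Valid 𝔸 t ∧ t.size = n} =
      treesWithAntichain n := by
  ext ⟨u, S⟩
  constructor
  · rintro ⟨t, ⟨-, hsize⟩, heq⟩
    obtain ⟨rfl, rfl⟩ := Prod.mk.inj heq
    exact ⟨by rw [size_shape, hsize], fun p hp => (isVertex_map _ t p).2 (IsOneRoot.isVertex hp),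
      isAntichain_isOneRoot t⟩
  · rintro ⟨hsize, hV, hS⟩
    refine ⟨paint u S, ⟨valid_paint u S, by rw [← size_shape, shape_paint, hsize]⟩, ?_⟩
    simp only [shape_paint, Prod.mk.injEq, true_and]
    ext p
    exact isOneRoot_paint_iff hV hS

theorem ncard_setOf_valid_size_eq (n : ℕ) :
    {t | Valid 𝔸 t ∧ t.size = n}.ncard = (treesWithAntichain n).ncard := by
  rw [← image_shape_isOneRoot, Set.InjOn.ncard_image]
  exact Set.LeftInvOn.injOn (f₁' := fun x => paint x.1 x.2) fun t ht =>
    paint_shape_setOf_isOneRoot ht.1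

end CTree

/-- For the matrix `[[1,1],[0,1]]`, the number of colored plane trees on `n ≥ 2` vertices
equals `C_{n-1} + D_n`. -/
theorem stmt19 (n : ℕ) (hn : 2 ≤ n) :
    totalCount (!![1, 1; 0, 1] : Matrix (Fin 2) (Fin 2) ℕ) n =
      catalan (n - 1) + antichainCount n := by
  obtain ⟨m, rfl⟩ : ∃ m, n = m + 1 := ⟨n - 1, by omega⟩
  rw [totalCount, CTree.ncard_setOf_valid_size_eq, CTree.ncard_treesWithAntichain,
    Nat.add_sub_cancel]
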